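/- arXiv:2409.16101 — 4 statements merged into one kernel-verified Lean document; each statement's English description precedes it below -/
import Mathlib

section
/- Let J : ℝ → ℝ be continuous, bounded, nonnegative, even, with J(0) > 0 and ∫_ℝ J = 1. Suppose there exist ς₁, ς₂ > 0 and M > 0 such that ς₁|x|^{−γ} ≤ J(x) ≤ ς₂|x|^{−γ} for |x| ≥ M, with γ ∈ (1, 2). Then there exist constants c₁, c₂ > 0 and h₀ > 0 such that for all h ≥ h₀, c₁ h^{2−γ} ≤ ∫₀^h ∫_h^∞ J(x − y) dy dx ≤ c₂ h^{2−γ}. -/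
/-!
Substituting `t = y - x` turns the inner integral into the right tail `F (h - x)` of the
reflected kernel `t ↦ J (-t)`, so the double integral is `∫₀ʰ F`. The decay hypothesis gives
`F s ≍ s ^ (1 - γ)` for `s ≥ M`, and `F ≤ ∫ J = 1 ≤ M ^ (γ - 1) s ^ (1 - γ)` for `s < M`.
As `F` is antitone, `h F h ≤ ∫₀ʰ F`; and since `1 - γ > -1`, the bound `F s ≤ C s ^ (1 - γ)`
on `(0, h)` integrates to `∫₀ʰ F ≤ C h ^ (2 - γ) / (2 - γ)`.
-/

open Set MeasureTheory

noncomputable def tailIntegral (f : ℝ → ℝ) (s : ℝ) : ℝ := ∫ t in Ioi s, f t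

theorem setIntegral_Ioi_comp_sub_right {E : Type*} [NormedAddCommGroup E] [NormedSpace ℝ E]
    (f : ℝ → E) (a b : ℝ) : ∫ y in Ioi a, f (y - b) = ∫ t in Ioi (a - b), f t := by
  have := (measurePreserving_sub_right volume b).setIntegral_preimage_emb
    (measurableEmbedding_subRight b) f (Ioi (a - b))
  rwa [preimage_sub_const_Ioi, sub_add_cancel] at this

theorem integral_Ioc_integral_Ioi_sub_eq_intervalIntegral_tailIntegral (J : ℝ → ℝ) {h : ℝ}
    (hh : 0 ≤ h) :
    ∫ x in Ioc 0 h, ∫ y in Ioi h, J (x - y) = ∫ s in 0..h, tailIntegral (fun t ↦ J (-t)) s := by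
  have hinner (x : ℝ) : ∫ y in Ioi h, J (x - y) = tailIntegral (fun t ↦ J (-t)) (h - x) := by
    simp_rw [← neg_sub _ x]
    exact setIntegral_Ioi_comp_sub_right (fun t ↦ J (-t)) h x
  simp_rw [← intervalIntegral.integral_of_le hh, hinner,
    intervalIntegral.integral_comp_sub_left (tailIntegral _) h, sub_self, sub_zero]

theorem le_mul_rpow_of_le_of_le_mul_rpow {F : ℝ → ℝ} {B c M r s : ℝ} (hM : 0 < M) (hr : r ≤ 0)
    (hB₀ : 0 ≤ B) (hB : ∀ s, F s ≤ B) (hc : ∀ s, M ≤ s → F s ≤ c * s ^ r) (hs : 0 < s) :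
    F s ≤ max c (B * M ^ (-r)) * s ^ r := by
  rcases le_total M s with hMs | hsM
  · exact (hc s hMs).trans (mul_le_mul_of_nonneg_right (le_max_left _ _) (by positivity))
  · calc F s ≤ B * M ^ (-r) * M ^ r := by
          rw [mul_assoc, ← Real.rpow_add hM, neg_add_cancel, Real.rpow_zero, mul_one]; exact hB s
      _ ≤ B * M ^ (-r) * s ^ r :=
          mul_le_mul_of_nonneg_left (Real.rpow_le_rpow_of_nonpos hs hsM hr) (by positivity)
      _ ≤ max c (B * M ^ (-r)) * s ^ r := by gcongr; exact le_max_right _ _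

section Tail

variable {f : ℝ → ℝ}

theorem tailIntegral_antitone (hf : Integrable f) (hf₀ : 0 ≤ f) : Antitone (tailIntegral f) :=
  fun _ _ hab ↦ setIntegral_mono_set hf.integrableOn (.of_forall hf₀)
    (Ioi_subset_Ioi hab).eventuallyLE

theorem tailIntegral_le_integral (hf : Integrable f) (hf₀ : 0 ≤ f) (s : ℝ) :
    tailIntegral f s ≤ ∫ t, f t :=
  setIntegral_le_integral hf (.of_forall hf₀)

theorem integral_Ioi_rpow_neg {γ s : ℝ} (hγ : 1 < γ) (hs : 0 < s) :
    ∫ t in Ioi s, t ^ (-γ) = s ^ (1 - γ) / (γ - 1) := by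
  rw [integral_Ioi_rpow_of_lt (by linarith) hs, neg_div, ← div_neg, neg_add', neg_neg,
    neg_add_eq_sub]

theorem tailIntegral_le_of_le_mul_rpow {γ c s : ℝ} (hγ : 1 < γ) (hs : 0 < s)
    (hf : IntegrableOn f (Ioi s)) (hle : ∀ t > s, f t ≤ c * t ^ (-γ)) :
    tailIntegral f s ≤ c / (γ - 1) * s ^ (1 - γ) := by
  calc tailIntegral f s ≤ ∫ t in Ioi s, c * t ^ (-γ) :=
        setIntegral_mono_on hf ((integrableOn_Ioi_rpow_of_lt (by linarith) hs).const_mul c)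
          measurableSet_Ioi hle
    _ = c / (γ - 1) * s ^ (1 - γ) := by
        rw [integral_const_mul, integral_Ioi_rpow_neg hγ hs]; ring

theorem le_tailIntegral_of_mul_rpow_le {γ c s : ℝ} (hγ : 1 < γ) (hs : 0 < s)
    (hf : IntegrableOn f (Ioi s)) (hle : ∀ t > s, c * t ^ (-γ) ≤ f t) :
    c / (γ - 1) * s ^ (1 - γ) ≤ tailIntegral f s := by
  calc c / (γ - 1) * s ^ (1 - γ) = ∫ t in Ioi s, c * t ^ (-γ) := by
        rw [integral_const_mul, integral_Ioi_rpow_neg hγ hs]; ring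
    _ ≤ tailIntegral f s :=
        setIntegral_mono_on ((integrableOn_Ioi_rpow_of_lt (by linarith) hs).const_mul c) hf
          measurableSet_Ioi hle

theorem tailIntegral_le_mul_rpow {γ c M s : ℝ} (hf : Integrable f) (hf₀ : 0 ≤ f) (hγ : 1 < γ)
    (hM : 0 < M) (hdecay : ∀ t, M ≤ t → f t ≤ c * t ^ (-γ)) (hs : 0 < s) :
    tailIntegral f s ≤ max (c / (γ - 1)) ((∫ t, f t) * M ^ (γ - 1)) * s ^ (1 - γ) := by
  simpa only [neg_sub] using le_mul_rpow_of_le_of_le_mul_rpow (r := 1 - γ) hM (by linarith)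
    (integral_nonneg hf₀) (tailIntegral_le_integral hf hf₀)
    (fun s hs ↦ tailIntegral_le_of_le_mul_rpow hγ (hM.trans_le hs) hf.integrableOn
      fun t ht ↦ hdecay t (hs.trans ht.le)) hs

end Tail

theorem mul_rpow_le_intervalIntegral_of_antitone {F : ℝ → ℝ} {c h r : ℝ} (hF : Antitone F)
    (hh : 0 < h) (hle : c * h ^ r ≤ F h) : c * h ^ (r + 1) ≤ ∫ s in 0..h, F s := by
  calc c * h ^ (r + 1) = h * (c * h ^ r) := by rw [Real.rpow_add_one hh.ne']; ring
    _ ≤ ∫ _ in 0..h, F h := by simpa using mul_le_mul_of_nonneg_left hle hh.le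
    _ ≤ ∫ s in 0..h, F s :=
        intervalIntegral.integral_mono_on hh.le intervalIntegrable_const hF.intervalIntegrable
          fun s hs ↦ hF hs.2

theorem intervalIntegral_le_of_le_mul_rpow {F : ℝ → ℝ} {c h r : ℝ}
    (hF : IntervalIntegrable F volume 0 h) (hh : 0 ≤ h) (hr : -1 < r)
    (hle : ∀ s ∈ Ioo 0 h, F s ≤ c * s ^ r) :
    ∫ s in 0..h, F s ≤ c / (r + 1) * h ^ (r + 1) := by
  calc ∫ s in 0..h, F s ≤ ∫ s in 0..h, c * s ^ r :=
        intervalIntegral.integral_mono_on_of_le_Ioo hh hF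
          ((intervalIntegral.intervalIntegrable_rpow' hr).const_mul c) hle
    _ = c / (r + 1) * h ^ (r + 1) := by
        rw [intervalIntegral.integral_const_mul, integral_rpow (.inl hr),
          Real.zero_rpow (by linarith)]
        ring

theorem double_integral_algebraic_decay_estimate_general
    (J : ℝ → ℝ) (γ ς₁ ς₂ M : ℝ)
    (hJpos : ∀ x, 0 ≤ J x) (hJint : ∫ x, J x = 1)
    (hγ : 1 < γ) (hγ2 : γ < 2) (hς₁ : 0 < ς₁) (hM : 0 < M)
    (hdecay : ∀ x : ℝ, M ≤ |x| → ς₁ * |x| ^ (-γ) ≤ J x ∧ J x ≤ ς₂ * |x| ^ (-γ)) :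
    ∃ c₁ > 0, ∃ c₂ > 0, ∃ h₀ > 0, ∀ h ≥ h₀,
      c₁ * h ^ (2 - γ) ≤ (∫ x in Ioc (0:ℝ) h, ∫ y in Ioi h, J (x - y)) ∧
      (∫ x in Ioc (0:ℝ) h, ∫ y in Ioi h, J (x - y)) ≤ c₂ * h ^ (2 - γ) := by
  set g : ℝ → ℝ := fun t ↦ J (-t)
  have hg₀ : 0 ≤ g := fun t ↦ hJpos (-t)
  have hg₁ : ∫ t, g t = 1 := (integral_neg_eq_self J volume).trans hJint
  have hg : Integrable g := .of_integral_ne_zero (by rw [hg₁]; exact one_ne_zero)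
  have hg_decay (t : ℝ) (ht : M ≤ t) : ς₁ * t ^ (-γ) ≤ g t ∧ g t ≤ ς₂ * t ^ (-γ) := by
    have habs : |-t| = t := by rw [abs_neg, abs_of_pos (hM.trans_le ht)]
    simpa only [habs] using hdecay (-t) (by rwa [habs])
  have hF_antitone := tailIntegral_antitone hg hg₀
  set C := max (ς₂ / (γ - 1)) (M ^ (γ - 1))
  have hF_le (s : ℝ) (hs : 0 < s) : tailIntegral g s ≤ C * s ^ (1 - γ) := by
    simpa only [hg₁, one_mul] using
      tailIntegral_le_mul_rpow hg hg₀ hγ hM (fun t ht ↦ (hg_decay t ht).2) hs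
  refine ⟨ς₁ / (γ - 1), div_pos hς₁ (by linarith), C / (2 - γ),
    div_pos (lt_max_of_lt_right (by positivity)) (by linarith), M, hM, fun h hh ↦ ?_⟩
  have hh_pos : 0 < h := hM.trans_le hh
  rw [integral_Ioc_integral_Ioi_sub_eq_intervalIntegral_tailIntegral J hh_pos.le,
    show 2 - γ = 1 - γ + 1 by ring]
  have hF_ge : ς₁ / (γ - 1) * h ^ (1 - γ) ≤ tailIntegral g h :=
    le_tailIntegral_of_mul_rpow_le hγ hh_pos hg.integrableOn
      fun t ht ↦ (hg_decay t (hh.trans ht.le)).1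
  exact ⟨mul_rpow_le_intervalIntegral_of_antitone hF_antitone hh_pos hF_ge,
    intervalIntegral_le_of_le_mul_rpow hF_antitone.intervalIntegrable hh_pos.le (by linarith)
      fun s hs ↦ hF_le s hs.1⟩

theorem double_integral_algebraic_decay_estimate
    (J : ℝ → ℝ) (γ ς₁ ς₂ M : ℝ)
    (hJc : Continuous J) (hJbdd : ∃ C, ∀ x, J x ≤ C)
    (hJpos : ∀ x, 0 ≤ J x) (hJeven : ∀ x, J (-x) = J x)
    (hJ0 : 0 < J 0) (hJint : ∫ x, J x = 1)
    (hγ : 1 < γ) (hγ2 : γ < 2) (hς₁ : 0 < ς₁) (hς₂ : 0 < ς₂) (hM : 0 < M)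
    (hdecay : ∀ x : ℝ, M ≤ |x| → ς₁ * |x| ^ (-γ) ≤ J x ∧ J x ≤ ς₂ * |x| ^ (-γ)) :
    ∃ c₁ > 0, ∃ c₂ > 0, ∃ h₀ > 0, ∀ h ≥ h₀,
      c₁ * h ^ (2 - γ) ≤ (∫ x in Ioc (0:ℝ) h, ∫ y in Ioi h, J (x - y)) ∧
      (∫ x in Ioc (0:ℝ) h, ∫ y in Ioi h, J (x - y)) ≤ c₂ * h ^ (2 - γ) :=
  double_integral_algebraic_decay_estimate_general J γ ς₁ ς₂ M hJpos hJint hγ hγ2 hς₁ hM hdecay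
end

section
/- Let J satisfy condition (J). For any l ≥ 0 and ε > 0, there exists k₀ > l, depending only on l, ε and J, such that for all k₁ > k₀ and k₂ with k₂ − k₁ > 2k₀, defining ψ(x) = min{1, (k₂ − x)/k₁}, one has ∫_l^{k₂} J(x − y) ψ(y) dy ≥ (1 − ε) ψ(x) for all x ∈ [k₀, k₂]. -/
/-!
Choose `R` with `∫_{-R}^{R} J > 1 - ε/2` and `k₀ ≥ l + 2R + 2R/ε`, so that `R/k₁ ≤ ε/2`.
Since `ψ ≥ 0` on `(l, k₂]`, the integral is at least the integral of `J(x - y) ψ⁺(y)` over the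
window `|y - x| ≤ R ⊆ (l, ∞)`. Pairing `y = x - t` with `y = x + t` by evenness of `J`, it suffices
that `ψ⁺(x - t) + ψ⁺(x + t) ≥ 2 (1 - R/k₁) ψ(x)` for `0 ≤ t ≤ R`: the clamped affine function loses
nothing on average unless it saturates at `1`, and then `ψ(x) ≥ 1/2` absorbs the loss `t/k₁`.
-/

open Set MeasureTheory intervalIntegral Filter
open scoped Interval

lemma two_mul_one_sub_mul_min_le_clamp_add_clamp {a u v : ℝ} (ha : 0 ≤ a) (hu : 0 ≤ u)
    (huv : u ≤ v) (hv : v ≤ 1 / 2) :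
    2 * (1 - v) * min 1 a ≤ max 0 (min 1 (a + u)) + max 0 (min 1 (a - u)) := by
  have hlo : 2 * (1 - v) * min 1 a ≤ 2 * (1 - u) * min 1 a := by gcongr
  refine hlo.trans ?_
  rcases le_or_gt (a + u) 1 with h | h
  · rw [min_eq_right (by linarith : a ≤ 1), min_eq_right h]
    have : a - u ≤ max 0 (min 1 (a - u)) := le_max_of_le_right (le_min (by linarith) le_rfl)
    nlinarith [le_max_right 0 (a + u)]
  · have h1 : 1 ≤ max 0 (min 1 (a + u)) := le_max_of_le_right (le_min le_rfl h.le)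
    have h2 : min 1 a - u ≤ max 0 (min 1 (a - u)) :=
      le_max_of_le_right (by rw [← min_sub_sub_right]; exact min_le_min (by linarith) le_rfl)
    have h3 : 1 - u ≤ min 1 a := le_min (by linarith) (by linarith)
    nlinarith [min_le_left 1 a]

theorem intervalIntegral_neg_eq_integral_add_comp_neg {f : ℝ → ℝ} {R : ℝ}
    (hf : IntervalIntegrable f volume (-R) R) :
    ∫ t in (-R)..R, f t = ∫ t in 0..R, (f t + f (-t)) := by
  have h0 : (0 : ℝ) ∈ [[-R, R]] := by
    rcases le_total 0 R with h | h <;> simp [h]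
  have hneg : IntervalIntegrable f volume (-R) 0 :=
    hf.mono_set (uIcc_subset_uIcc left_mem_uIcc h0)
  have hpos : IntervalIntegrable f volume 0 R :=
    hf.mono_set (uIcc_subset_uIcc h0 right_mem_uIcc)
  have hneg' : IntervalIntegrable (fun t => f (-t)) volume 0 R := by
    simpa using ((IntervalIntegrable.iff_comp_neg (f := f)).mp hneg).symm
  rw [← integral_add_adjacent_intervals hneg hpos, add_comm, integral_add hpos hneg',
    integral_comp_neg, neg_zero]

theorem exists_lt_intervalIntegral_neg {f : ℝ → ℝ} (hf : Integrable f) {c : ℝ}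
    (hc : c < ∫ x, f x) : ∃ R > 0, c < ∫ t in (-R)..R, f t := by
  have hlim : Tendsto (fun R : ℝ => ∫ t in (-R)..R, f t) atTop (nhds (∫ x, f x)) :=
    intervalIntegral_tendsto_integral hf tendsto_neg_atTop_atBot tendsto_id
  exact ((eventually_gt_atTop 0).and (hlim.eventually (eventually_gt_nhds hc))).exists

theorem intervalIntegral_le_setIntegral_Ioc_of_nonneg {F : ℝ → ℝ} {l a b c : ℝ}
    (hF : Continuous F) (hF0 : ∀ y, 0 ≤ F y) (hFc : ∀ y, c < y → F y = 0)
    (hla : l ≤ a) (hab : a ≤ b) :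
    ∫ y in a..b, F y ≤ ∫ y in Ioc l c, F y := by
  rw [integral_of_le hab]
  calc ∫ y in Ioc a b, F y ≤ ∫ y in Ioc l (max b c), F y :=
        setIntegral_mono_set hF.integrableOn_Ioc (Eventually.of_forall hF0)
          (Ioc_subset_Ioc hla (le_max_left b c)).eventuallyLE
    _ = ∫ y in Ioc l c, F y :=
        setIntegral_eq_of_subset_of_forall_sdiff_eq_zero measurableSet_Ioc
          (Ioc_subset_Ioc le_rfl (le_max_right b c)) fun y hy => hFc y <| by
            by_contra! h; exact hy.2 ⟨hy.1.1, h⟩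

theorem intervalIntegral_sub_add_eq_of_even {J g : ℝ → ℝ} (hJ : Continuous J)
    (hJeven : ∀ t, J (-t) = J t) (hg : Continuous g) (x R : ℝ) :
    ∫ y in (x - R)..(x + R), J (x - y) * g y = ∫ t in 0..R, J t * (g (x - t) + g (x + t)) := by
  calc ∫ y in (x - R)..(x + R), J (x - y) * g y
      = ∫ t in (-R)..R, J (x - (x - t)) * g (x - t) := by
        rw [integral_comp_sub_left (fun y => J (x - y) * g y), sub_neg_eq_add]
    _ = ∫ t in 0..R, (J t * g (x - t) + J (-t) * g (x + t)) := by
        rw [intervalIntegral_neg_eq_integral_add_comp_neg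
          (Continuous.intervalIntegrable (by fun_prop) _ _)]
        simp only [sub_sub_cancel, sub_neg_eq_add, sub_add_cancel_left]
    _ = ∫ t in 0..R, J t * (g (x - t) + g (x + t)) := by
        simp only [hJeven, mul_add]

theorem le_intervalIntegral_sub_add_clamp {J : ℝ → ℝ} (hJ : Continuous J)
    (hJpos : ∀ t, 0 ≤ J t) (hJeven : ∀ t, J (-t) = J t) {k₁ k₂ x R : ℝ} (hR : 0 ≤ R)
    (hRk : 2 * R ≤ k₁) (hx : x ≤ k₂) :
    (1 - R / k₁) * min 1 ((k₂ - x) / k₁) * ∫ t in (-R)..R, J t ≤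
      ∫ y in (x - R)..(x + R), J (x - y) * max 0 (min 1 ((k₂ - y) / k₁)) := by
  have hk₁ : 0 ≤ k₁ := by linarith
  rw [intervalIntegral_sub_add_eq_of_even hJ hJeven (by fun_prop) x R,
    intervalIntegral_neg_eq_integral_add_comp_neg (hJ.intervalIntegrable _ _),
    ← intervalIntegral.integral_const_mul]
  refine integral_mono_on hR (Continuous.intervalIntegrable (by fun_prop) _ _)
    (Continuous.intervalIntegrable (by fun_prop) _ _) fun t ht => ?_
  have hRk' : R / k₁ ≤ 1 / 2 := by
    rcases hk₁.eq_or_lt with h | h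
    · simp [← h]
    · rw [div_le_iff₀ h]; linarith
  have hclamp := two_mul_one_sub_mul_min_le_clamp_add_clamp
    (div_nonneg (sub_nonneg.2 hx) hk₁) (div_nonneg ht.1 hk₁)
    (div_le_div_of_nonneg_right ht.2 hk₁) hRk'
  rw [hJeven, show (k₂ - (x - t)) / k₁ = (k₂ - x) / k₁ + t / k₁ by ring,
    show (k₂ - (x + t)) / k₁ = (k₂ - x) / k₁ - t / k₁ by ring]
  nlinarith [mul_le_mul_of_nonneg_left hclamp (hJpos t)]

theorem le_setIntegral_Ioc_mul_min {J : ℝ → ℝ} (hJ : Continuous J)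
    (hJpos : ∀ t, 0 ≤ J t) (hJeven : ∀ t, J (-t) = J t) {l k₁ k₂ x R : ℝ} (hR : 0 ≤ R)
    (hRk : 2 * R ≤ k₁) (hl : l ≤ x - R) (hx : x ≤ k₂) :
    (1 - R / k₁) * min 1 ((k₂ - x) / k₁) * ∫ t in (-R)..R, J t ≤
      ∫ y in Ioc l k₂, J (x - y) * min 1 ((k₂ - y) / k₁) := by
  have hk₁ : 0 ≤ k₁ := by linarith
  calc _ ≤ ∫ y in (x - R)..(x + R), J (x - y) * max 0 (min 1 ((k₂ - y) / k₁)) :=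
        le_intervalIntegral_sub_add_clamp hJ hJpos hJeven hR hRk hx
    _ ≤ ∫ y in Ioc l k₂, J (x - y) * max 0 (min 1 ((k₂ - y) / k₁)) := by
        refine intervalIntegral_le_setIntegral_Ioc_of_nonneg (by fun_prop)
          (fun y => mul_nonneg (hJpos _) (le_max_left _ _)) (fun y hy => ?_) hl (by linarith)
        rw [max_eq_left (min_le_of_right_le (div_nonpos_of_nonpos_of_nonneg (by linarith) hk₁)),
          mul_zero]
    _ = ∫ y in Ioc l k₂, J (x - y) * min 1 ((k₂ - y) / k₁) :=
        setIntegral_congr_fun measurableSet_Ioc fun y hy => by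
          rw [max_eq_right (le_min zero_le_one (div_nonneg (sub_nonneg.2 hy.2) hk₁))]

theorem kernel_psi_lower_bound_general
    (J : ℝ → ℝ)
    (hJc : Continuous J)
    (hJpos : ∀ x, 0 ≤ J x) (hJeven : ∀ x, J (-x) = J x)
    (hJint : ∫ x, J x = 1) :
    ∀ l ≥ (0:ℝ), ∀ ε > (0:ℝ), ∃ k₀ > l, ∀ k₁ k₂ : ℝ, k₀ < k₁ → 2 * k₀ < k₂ - k₁ →
      ∀ x ∈ Icc k₀ k₂,
        (1 - ε) * min 1 ((k₂ - x) / k₁) ≤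
          ∫ y in Ioc l k₂, J (x - y) * min 1 ((k₂ - y) / k₁) := by
  intro l hl ε hε
  have hJi : Integrable J := by
    by_contra h
    rw [integral_undef h] at hJint
    exact zero_ne_one hJint
  obtain ⟨R, hR, hRJ⟩ := exists_lt_intervalIntegral_neg hJi (c := 1 - ε / 2) (by linarith)
  have hRε : 0 < 2 * R / ε := by positivity
  refine ⟨l + 2 * R + 2 * R / ε, by linarith, ?_⟩
  rintro k₁ k₂ hk₁ - x ⟨hk₀x, hxk₂⟩
  have hk₁0 : 0 < k₁ := by linarith
  have hRk₁ : R / k₁ ≤ ε / 2 := by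
    rw [div_le_iff₀ hk₁0]
    have := (div_lt_iff₀ hε).1 (show 2 * R / ε < k₁ by linarith)
    linarith
  have hRk₁_le_one : R / k₁ ≤ 1 := by rw [div_le_iff₀ hk₁0]; linarith
  have hψ : 0 ≤ min 1 ((k₂ - x) / k₁) := le_min zero_le_one (div_nonneg (by linarith) hk₁0.le)
  refine le_trans ?_ (le_setIntegral_Ioc_mul_min hJc hJpos hJeven hR.le (by linarith)
    (by linarith) hxk₂)
  have : 1 - ε ≤ (1 - R / k₁) * ∫ t in (-R)..R, J t := by
    nlinarith [mul_nonneg (sub_nonneg.2 hRk₁_le_one) (sub_nonneg.2 hRJ.le),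
      mul_nonneg (div_nonneg hR.le hk₁0.le) hε.le]
  nlinarith [mul_le_mul_of_nonneg_right this hψ]

theorem kernel_psi_lower_bound
    (J : ℝ → ℝ)
    (hJc : Continuous J) (hJbdd : ∃ C, ∀ x, J x ≤ C)
    (hJpos : ∀ x, 0 ≤ J x) (hJeven : ∀ x, J (-x) = J x)
    (hJ0 : 0 < J 0) (hJint : ∫ x, J x = 1) :
    ∀ l ≥ (0:ℝ), ∀ ε > (0:ℝ), ∃ k₀ > l, ∀ k₁ k₂ : ℝ, k₀ < k₁ → 2 * k₀ < k₂ - k₁ →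
      ∀ x ∈ Icc k₀ k₂,
        (1 - ε) * min 1 ((k₂ - x) / k₁) ≤
          ∫ y in Ioc l k₂, J (x - y) * min 1 ((k₂ - y) / k₁) :=
  kernel_psi_lower_bound_general J hJc hJpos hJeven hJint
end

section
/- Let f be a Fisher-KPP nonlinearity with positive zero u*, d > 0, and let (‖J_n‖₁)_{n} be a nondecreasing sequence in (0, 1] converging to 1. Suppose for each n the function u ↦ d(‖J_n‖₁ − 1)u + f(u) has a unique positive zero u*_n. Then u*_n ≤ u*_{n+1} ≤ u* for all n and u*_n → u* as n → ∞. -/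
/-!
A positive root `u` of `c u + f u = 0` is exactly a point where `f u / u = -c`. Since `f u / u` is
strictly decreasing, such roots move to the right as `c` increases; the unperturbed root `u*` is the
case `c = 0`. With `c_n = d (‖J_n‖₁ - 1)` nondecreasing and nonpositive, the roots `u*_n` therefore
increase and stay below `u*`, so they converge to some `L ∈ (0, u*]`. Passing to the limit in the
equation gives `f L = 0`, and comparing `L` with `u*` once more forces `L = u*`.
-/

open Set Filter Topology

section PerturbedRoots

variable {f : ℝ → ℝ}

lemma div_eq_neg_of_perturbed_root {c u : ℝ} (hu : u ≠ 0) (h : c * u + f u = 0) :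
    f u / u = -c := by
  rw [div_eq_iff hu]
  linarith

lemma perturbed_root_le_of_le (hmono : StrictAntiOn (fun u => f u / u) (Ioi 0))
    {c₁ c₂ u₁ u₂ : ℝ} (hu₁ : 0 < u₁) (hu₂ : 0 < u₂)
    (h₁ : c₁ * u₁ + f u₁ = 0) (h₂ : c₂ * u₂ + f u₂ = 0) (hc : c₁ ≤ c₂) : u₁ ≤ u₂ := by
  refine (hmono.le_iff_ge hu₂ hu₁).1 ?_
  simp only [div_eq_neg_of_perturbed_root hu₁.ne' h₁, div_eq_neg_of_perturbed_root hu₂.ne' h₂]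
  linarith

lemma root_of_tendsto_perturbed_roots {c u : ℕ → ℝ} {L : ℝ} (hf : ContinuousAt f L)
    (hc : Tendsto c atTop (𝓝 0)) (hu : Tendsto u atTop (𝓝 L))
    (h : ∀ n, c n * u n + f (u n) = 0) : f L = 0 := by
  have hlim : Tendsto (fun n => c n * u n + f (u n)) atTop (𝓝 (0 * L + f L)) :=
    (hc.mul hu).add (hf.tendsto.comp hu)
  simp only [h, zero_mul, zero_add] at hlim
  exact (tendsto_nhds_unique tendsto_const_nhds hlim).symm

end PerturbedRoots

theorem perturbed_roots_converge_general
    (f : ℝ → ℝ) (ustar : ℝ) (hustar : 0 < ustar)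
    (hf : ContDiff ℝ 1 f)
    (hfu : f ustar = 0)
    (hmono : StrictAntiOn (fun u => f u / u) (Ioi (0:ℝ)))
    (d : ℝ) (hd : 0 < d)
    (a : ℕ → ℝ) (ha : ∀ n, 0 < a n ∧ a n ≤ 1)
    (hamono : Monotone a) (halim : Tendsto a atTop (nhds 1))
    (un : ℕ → ℝ)
    (hun : ∀ n, 0 < un n ∧ d * (a n - 1) * un n + f (un n) = 0 ∧
      ∀ v : ℝ, 0 < v → d * (a n - 1) * v + f v = 0 → v = un n) :
    (∀ n, un n ≤ un (n + 1) ∧ un n ≤ ustar) ∧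
      Tendsto un atTop (nhds ustar) := by
  have hstar : 0 * ustar + f ustar = 0 := by simp [hfu]
  have hc_nonpos (n : ℕ) : d * (a n - 1) ≤ 0 :=
    mul_nonpos_of_nonneg_of_nonpos hd.le (by linarith [(ha n).2])
  have hc_mono : Monotone fun n => d * (a n - 1) := fun m n hmn =>
    mul_le_mul_of_nonneg_left (by linarith [hamono hmn]) hd.le
  have hle (n : ℕ) : un n ≤ ustar :=
    perturbed_root_le_of_le hmono (hun n).1 hustar (hun n).2.1 hstar (hc_nonpos n)
  have hmon : Monotone un := fun m n hmn =>
    perturbed_root_le_of_le hmono (hun m).1 (hun n).1 (hun m).2.1 (hun n).2.1 (hc_mono hmn)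
  refine ⟨fun n => ⟨hmon n.le_succ, hle n⟩, ?_⟩
  have hbdd : BddAbove (range un) := ⟨ustar, forall_mem_range.2 hle⟩
  have hlim := tendsto_atTop_ciSup hmon hbdd
  have hL_pos : 0 < ⨆ n, un n := (hun 0).1.trans_le (le_ciSup hbdd 0)
  have hc_lim : Tendsto (fun n => d * (a n - 1)) atTop (𝓝 0) := by
    simpa using (halim.sub_const 1).const_mul d
  have hfL := root_of_tendsto_perturbed_roots hf.continuous.continuousAt hc_lim hlim
    fun n => (hun n).2.1
  have hL : ⨆ n, un n = ustar := le_antisymm (ciSup_le hle)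
    (perturbed_root_le_of_le hmono hustar hL_pos hstar (by simp [hfL]) le_rfl)
  rwa [hL] at hlim

theorem perturbed_roots_converge
    (f : ℝ → ℝ) (ustar : ℝ) (hustar : 0 < ustar)
    (hf : ContDiff ℝ 1 f)
    (hf0 : f 0 = 0) (hf'0 : 0 < deriv f 0)
    (hfu : f ustar = 0) (hf'u : deriv f ustar < 0)
    (hmono : StrictAntiOn (fun u => f u / u) (Ioi (0:ℝ)))
    (d : ℝ) (hd : 0 < d)
    (a : ℕ → ℝ) (ha : ∀ n, 0 < a n ∧ a n ≤ 1)
    (hamono : Monotone a) (halim : Tendsto a atTop (nhds 1))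
    (un : ℕ → ℝ)
    (hun : ∀ n, 0 < un n ∧ d * (a n - 1) * un n + f (un n) = 0 ∧
      ∀ v : ℝ, 0 < v → d * (a n - 1) * v + f v = 0 → v = un n) :
    (∀ n, un n ≤ un (n + 1) ∧ un n ≤ ustar) ∧
      Tendsto un atTop (nhds ustar) :=
  perturbed_roots_converge_general f ustar hustar hf hfu hmono d hd a ha hamono halim un hun
end

section
/- Suppose h : [T, ∞) → (e, ∞) is C¹, nondecreasing, and there is a constant K > 0 with h'(t) ≤ K·ln(h(t)) for all t ≥ T. Then there exists C > 0 such that h(t) ≤ C t ln t for all large t. -/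
/-!
Along the solution, `F = h / log h` grows at most linearly: its derivative is
`h' (log h - 1) / (log h)² ≤ K`. Since `log y ≤ y / 2`, one has `log h ≤ 2 log F`, so
`h = F log h ≤ 2 F log F`, and `F ≤ a + K t` makes the right-hand side `O(t log t)`.
-/

open Set Filter Real

lemma log_le_half_self {y : ℝ} (hy : 0 < y) : log y ≤ y / 2 := by
  have hroot := log_le_sub_one_of_pos (sqrt_pos.2 hy)
  rw [log_sqrt hy.le] at hroot
  nlinarith [sq_nonneg (√y - 2), sq_sqrt hy.le]

lemma log_le_two_mul_log_div_log {x : ℝ} (hx : 1 < log x) : log x ≤ 2 * log (x / log x) := by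
  have hx0 : x ≠ 0 := by rintro rfl; norm_num at hx
  rw [log_div hx0 (by positivity)]
  linarith [log_le_half_self (one_pos.trans hx)]

lemma le_two_mul_div_log_mul_log {x : ℝ} (hx : 1 < log x) (hx0 : 0 < x) :
    x ≤ 2 * (x / log x * log (x / log x)) := by
  have hL : 0 < log x := one_pos.trans hx
  calc x = x / log x * log x := (div_mul_cancel₀ x hL.ne').symm
    _ ≤ x / log x * (2 * log (x / log x)) := by
        gcongr
        exact log_le_two_mul_log_div_log hx
    _ = 2 * (x / log x * log (x / log x)) := by ring

lemma one_le_div_log {x : ℝ} (hx : 1 < log x) (hx0 : 0 < x) : 1 ≤ x / log x := by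
  have hL : 0 < log x := one_pos.trans hx
  have hlog : 0 < log (x / log x) := by linarith [log_le_two_mul_log_div_log hx]
  exact ((log_pos_iff (by positivity)).1 hlog).le

lemma hasDerivAt_div_log {f : ℝ → ℝ} {f' t : ℝ} (hf : HasDerivAt f f' t) (hlog : log (f t) ≠ 0) :
    HasDerivAt (fun s => f s / log (f s)) (f' * (log (f t) - 1) / log (f t) ^ 2) t := by
  have hf0 : f t ≠ 0 := by rintro h0; simp [h0] at hlog
  refine (hf.div (hf.log hf0) hlog).congr_deriv ?_
  field_simp

lemma mul_log_sub_one_div_sq_le {d L K : ℝ} (hL : 1 < L) (hK : 0 ≤ K) (hd : d ≤ K * L) :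
    d * (L - 1) / L ^ 2 ≤ K := by
  rw [div_le_iff₀ (by positivity)]
  nlinarith [mul_le_mul_of_nonneg_right hd (by linarith : (0 : ℝ) ≤ L - 1)]

lemma div_log_le_linear {h h' : ℝ → ℝ} {T K : ℝ} (hK : 0 ≤ K)
    (hlog : ∀ t ∈ Ici T, 1 < log (h t)) (hderiv : ∀ t ∈ Ici T, HasDerivAt h (h' t) t)
    (hineq : ∀ t ∈ Ici T, h' t ≤ K * log (h t)) :
    ∀ t ∈ Ici T, h t / log (h t) ≤ h T / log (h T) + K * (t - T) := by
  have hF : ∀ t ∈ Ici T, HasDerivAt (fun s => h s / log (h s))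
      (h' t * (log (h t) - 1) / log (h t) ^ 2) t := fun t ht =>
    hasDerivAt_div_log (hderiv t ht) (one_pos.trans (hlog t ht)).ne'
  have hint : ∀ s ∈ interior (Ici T), s ∈ Ici T := fun s hs => interior_subset hs
  intro t ht
  have hmvt := (convex_Ici T).image_sub_le_mul_sub_of_deriv_le
    (fun s hs => (hF s hs).continuousAt.continuousWithinAt)
    (fun s hs => (hF s (hint s hs)).differentiableAt.differentiableWithinAt)
    (fun s hs => (hF s (hint s hs)).deriv ▸
      mul_log_sub_one_div_sq_le (hlog s (hint s hs)) hK (hineq s (hint s hs)))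
    T self_mem_Ici t ht ht
  linarith

lemma eventually_mul_log_le_of_le_linear (a K : ℝ) :
    ∀ᶠ t in atTop, ∀ x, 1 ≤ x → x ≤ a + K * t → x * log x ≤ 2 * (|a| + K) * t * log t := by
  filter_upwards [eventually_ge_atTop 1, eventually_ge_atTop (|a| + K)] with t ht1 ht x hx1 hx
  have hlin : x ≤ (|a| + K) * t := by
    nlinarith [le_abs_self a, mul_le_mul_of_nonneg_left ht1 (abs_nonneg a)]
  have hlog : log x ≤ 2 * log t :=
    calc log x ≤ log (t ^ 2) := log_le_log (by positivity) (by nlinarith)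
      _ = 2 * log t := by rw [log_pow]; norm_num
  calc x * log x ≤ ((|a| + K) * t) * (2 * log t) :=
        mul_le_mul hlin hlog (log_nonneg hx1) (by linarith)
    _ = 2 * (|a| + K) * t * log t := by ring

theorem ode_comparison_critical_general
    (h : ℝ → ℝ) (T K : ℝ) (hK : 0 < K)
    (hgt : ∀ t ∈ Ici T, Real.exp 1 < h t)
    (hC1 : ∀ t ∈ Ici T, HasDerivAt h (deriv h t) t)
    (hineq : ∀ t ∈ Ici T, deriv h t ≤ K * Real.log (h t)) :
    ∃ C > 0, ∀ᶠ t in atTop, h t ≤ C * t * Real.log t := by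
  have hpos : ∀ t ∈ Ici T, 0 < h t := fun t ht => (exp_pos 1).trans (hgt t ht)
  have hlog : ∀ t ∈ Ici T, 1 < log (h t) := fun t ht => (lt_log_iff_exp_lt (hpos t ht)).2 (hgt t ht)
  set a := h T / log (h T) - K * T
  have hlinear : ∀ t ∈ Ici T, h t / log (h t) ≤ a + K * t := fun t ht => by
    linarith [div_log_le_linear hK.le hlog hC1 hineq t ht]
  refine ⟨4 * (|a| + K), by positivity, ?_⟩
  filter_upwards [eventually_ge_atTop T, eventually_mul_log_le_of_le_linear a K] with t ht hbound
  calc h t ≤ 2 * (h t / log (h t) * log (h t / log (h t))) :=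
        le_two_mul_div_log_mul_log (hlog t ht) (hpos t ht)
    _ ≤ 2 * (2 * (|a| + K) * t * log t) := mul_le_mul_of_nonneg_left
        (hbound _ (one_le_div_log (hlog t ht) (hpos t ht)) (hlinear t ht)) zero_le_two
    _ = 4 * (|a| + K) * t * log t := by ring

theorem ode_comparison_critical
    (h : ℝ → ℝ) (T K : ℝ) (hK : 0 < K)
    (hgt : ∀ t ∈ Ici T, Real.exp 1 < h t)
    (hC1 : ∀ t ∈ Ici T, HasDerivAt h (deriv h t) t)
    (hmono : MonotoneOn h (Ici T))
    (hineq : ∀ t ∈ Ici T, deriv h t ≤ K * Real.log (h t)) :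
    ∃ C > 0, ∀ᶠ t in atTop, h t ≤ C * t * Real.log t :=
  ode_comparison_critical_general h T K hK hgt hC1 hineq
end
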